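/- arXiv:1702.04664 — 3 statements merged into one kernel-verified Lean document; each statement's English description precedes it below -/
import Mathlib

section
/- With A(x) := Q_δ(Φx + ξ) componentwise, if min over z ∈ C⁻ of ‖Φz‖_∞ > δ, then A(C1) ∩ A(C2) = ∅, i.e., no x1 ∈ C1 and x2 ∈ C2 satisfy A(x1) = A(x2). -/
open Pointwise

theorem stmt_3 {n m : ℕ} (δ : ℝ) (hδ : 0 < δ)
    (C1 C2 : Set (Fin n → ℝ))
    (Φ : (Fin n → ℝ) →ₗ[ℝ] (Fin m → ℝ)) (ξ : Fin m → ℝ)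
    (A : (Fin n → ℝ) → (Fin m → ℝ))
    (hA : ∀ x, A x = fun j => δ * ⌊(Φ x j + ξ j) / δ⌋)
    (hτ : ∀ z ∈ C1 - C2, δ < ‖Φ z‖) :
    Disjoint (A '' C1) (A '' C2) := by
  rw [Set.disjoint_left]
  rintro y ⟨x1, hx1, rfl⟩ ⟨x2, hx2, he⟩
  have hz : x1 - x2 ∈ C1 - C2 := Set.sub_mem_sub hx1 hx2
  have h := hτ _ hz
  have hlt : ‖Φ (x1 - x2)‖ < δ := by
    rw [pi_norm_lt_iff hδ]
    intro j
    have hj := congrFun he j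
    rw [hA, hA] at hj
    simp only at hj
    have hfl : ⌊(Φ x1 j + ξ j) / δ⌋ = ⌊(Φ x2 j + ξ j) / δ⌋ := by
      have := mul_left_cancel₀ (ne_of_gt hδ) hj
      exact_mod_cast this.symm
    have habs := Int.abs_sub_lt_one_of_floor_eq_floor hfl.symm
    have : |(Φ x2 j + ξ j) / δ - (Φ x1 j + ξ j) / δ| < 1 := habs
    rw [div_sub_div_same, abs_div, abs_of_pos hδ, div_lt_one hδ] at this
    have : |Φ x2 j - Φ x1 j| < δ := by simpa using this
    rw [map_sub]
    simp only [Pi.sub_apply, Real.norm_eq_abs]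
    rwa [abs_sub_comm]
  linarith
end

section
/- Let ξ be a random variable uniformly distributed on [0, δ] with δ > 0, and fix real numbers a, b. Then the expectation E|Q_δ(a + ξ) − Q_δ(b + ξ)| = |a − b|, where Q_δ(t) = δ⌊t/δ⌋. -/
open MeasureTheory

private lemma floor_mono_aux (x : ℝ) : Monotone (fun u : ℝ => (⌊x + u⌋ : ℝ)) := by
  intro u v huv
  dsimp only
  exact_mod_cast Int.floor_le_floor (by linarith)

private lemma floor_intble (x a b : ℝ) :
    IntervalIntegrable (fun u : ℝ => (⌊x + u⌋ : ℝ)) volume a b :=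
  (floor_mono_aux x).intervalIntegrable

private lemma floor_int_aux (s : ℝ) (h0 : 0 ≤ s) (h1 : s < 1) :
    ∫ u in (0:ℝ)..1, (⌊s + u⌋ : ℝ) = s := by
  have hae : ∀ᵐ u ∂(volume : Measure ℝ), u ∈ Set.Ioc (0:ℝ) 1 →
      (⌊s + u⌋ : ℝ) = (Set.Ioc (1 - s) 1).indicator (fun _ => (1:ℝ)) u := by
    have hpt : (volume : Measure ℝ) {(1 - s : ℝ)} = 0 := measure_singleton _
    filter_upwards [compl_mem_ae_iff.mpr hpt] with u hu hmem
    simp only [Set.mem_compl_iff, Set.mem_singleton_iff] at hu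
    rcases Ne.lt_or_gt hu with h | h
    · -- u < 1 - s : floor = 0, not in Ioc
      rw [Set.indicator_of_notMem (by simp only [Set.mem_Ioc, not_and]; intro h'; linarith)]
      have : ⌊s + u⌋ = 0 :=
        Int.floor_eq_zero_iff.mpr (Set.mem_Ico.mpr ⟨by linarith [hmem.1], by linarith⟩)
      simp [this]
    · -- u > 1 - s : floor = 1, in Ioc
      rw [Set.indicator_of_mem (Set.mem_Ioc.mpr ⟨h, hmem.2⟩)]
      have : ⌊s + u⌋ = 1 :=
        Int.floor_eq_iff.mpr ⟨by push_cast; linarith, by push_cast; linarith [hmem.2]⟩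
      simp [this]
  rw [intervalIntegral.integral_of_le (by norm_num : (0:ℝ) ≤ 1)]
  rw [setIntegral_congr_ae measurableSet_Ioc hae]
  rw [setIntegral_indicator measurableSet_Ioc]
  have hinter : Set.Ioc (0:ℝ) 1 ∩ Set.Ioc (1 - s) 1 = Set.Ioc (1 - s) 1 := by
    apply Set.inter_eq_right.mpr
    intro y hy
    exact ⟨by linarith [hy.1], hy.2⟩
  rw [hinter, setIntegral_const, smul_eq_mul, mul_one, Real.volume_real_Ioc_of_le (by linarith)]
  ring

private lemma floor_int (x : ℝ) : ∫ u in (0:ℝ)..1, (⌊x + u⌋ : ℝ) = x := by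
  have key : ∀ u : ℝ, (⌊x + u⌋ : ℝ) = (⌊x⌋ : ℝ) + (⌊Int.fract x + u⌋ : ℝ) := by
    intro u
    have h1 : x + u = (⌊x⌋ : ℤ) + (Int.fract x + u) := by
      rw [Int.fract]; ring
    rw [h1, Int.floor_intCast_add]
    push_cast; ring
  simp_rw [key]
  rw [intervalIntegral.integral_add intervalIntegrable_const (floor_intble _ _ _),
    intervalIntegral.integral_const,
    floor_int_aux _ (Int.fract_nonneg x) (Int.fract_lt_one x)]
  simp [Int.floor_add_fract]

private lemma floor_scaled (δ : ℝ) (hδ : 0 < δ) (a : ℝ) :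
    ∫ ξ in (0:ℝ)..δ, (⌊(a + ξ) / δ⌋ : ℝ) = a := by
  have h : ∀ ξ : ℝ, (a + ξ) / δ = a / δ + δ⁻¹ * ξ := by
    intro ξ; field_simp
  simp_rw [h]
  rw [intervalIntegral.integral_comp_mul_left (fun u => (⌊a / δ + u⌋ : ℝ)) (inv_ne_zero hδ.ne')]
  rw [mul_zero, inv_mul_cancel₀ hδ.ne', floor_int (a / δ), smul_eq_mul, inv_inv]
  field_simp

private lemma floor_mono_div (δ : ℝ) (hδ : 0 < δ) (c : ℝ) :
    Monotone (fun ξ : ℝ => (⌊(c + ξ) / δ⌋ : ℝ)) := by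
  intro u v huv
  dsimp only
  exact_mod_cast Int.floor_le_floor (by gcongr)

theorem stmt_6 (δ : ℝ) (hδ : 0 < δ) (a b : ℝ) :
    δ⁻¹ * ∫ ξ in (0:ℝ)..δ, |δ * ⌊(a + ξ) / δ⌋ - δ * ⌊(b + ξ) / δ⌋| = |a - b| := by
  wlog hab : b ≤ a with H
  · have := H δ hδ b a (le_of_not_ge hab)
    simp_rw [abs_sub_comm (δ * (⌊(b + _) / δ⌋:ℝ))] at this
    rw [this, abs_sub_comm]
  have habs : ∀ ξ : ℝ, |δ * (⌊(a + ξ) / δ⌋:ℝ) - δ * (⌊(b + ξ) / δ⌋:ℝ)|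
      = δ * (⌊(a + ξ) / δ⌋:ℝ) - δ * (⌊(b + ξ) / δ⌋:ℝ) := by
    intro ξ
    apply abs_of_nonneg
    have : (⌊(b + ξ) / δ⌋:ℝ) ≤ (⌊(a + ξ) / δ⌋:ℝ) := by
      exact_mod_cast Int.floor_le_floor (by gcongr)
    nlinarith
  simp_rw [habs]
  have hia : IntervalIntegrable (fun ξ : ℝ => δ * (⌊(a + ξ) / δ⌋:ℝ)) volume 0 δ :=
    ((floor_mono_div δ hδ a).intervalIntegrable).const_mul δ
  have hib : IntervalIntegrable (fun ξ : ℝ => δ * (⌊(b + ξ) / δ⌋:ℝ)) volume 0 δ :=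
    ((floor_mono_div δ hδ b).intervalIntegrable).const_mul δ
  rw [intervalIntegral.integral_sub hia hib,
    intervalIntegral.integral_const_mul, intervalIntegral.integral_const_mul,
    floor_scaled δ hδ a, floor_scaled δ hδ b, abs_of_nonneg (by linarith : (0:ℝ) ≤ a - b)]
  field_simp
end

section
/- Let a, b be real numbers with b − a = τ ∈ (0, δ], and let ξ ~ Uniform([0, δ]). Then the probability that Q_δ(a + ξ) ≠ Q_δ(b + ξ) equals τ/δ. More generally for any τ ≥ 0, P[Q_δ(a+ξ) ≠ Q_δ(b+ξ)] = min(1, τ/δ). -/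
open MeasureTheory

lemma floor_ne_iff' {x y : ℝ} (hxy : x ≤ y) :
    ⌊x⌋ ≠ ⌊y⌋ ↔ ∃ n : ℤ, x < n ∧ (n:ℝ) ≤ y := by
  constructor
  · intro h
    have hlt : ⌊x⌋ < ⌊y⌋ := lt_of_le_of_ne (Int.floor_le_floor hxy) h
    have h1 : ((⌊x⌋:ℝ) + 1) ≤ (⌊y⌋:ℝ) := by exact_mod_cast Int.add_one_le_of_lt hlt
    have h2 : x < (⌊x⌋:ℝ) + 1 := Int.lt_floor_add_one x
    exact ⟨⌊y⌋, by linarith, Int.floor_le y⟩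
  · rintro ⟨n, h1, h2⟩
    have hx : ⌊x⌋ < n := Int.floor_lt.mpr h1
    have hy : n ≤ ⌊y⌋ := Int.le_floor.mpr h2
    omega

theorem stmt_7 (δ : ℝ) (hδ : 0 < δ) (a b : ℝ) (hab : a ≤ b) :
    (volume {ξ ∈ Set.Icc (0:ℝ) δ | δ * ⌊(a + ξ) / δ⌋ ≠ δ * ⌊(b + ξ) / δ⌋}).toReal / δ
      = min 1 ((b - a) / δ) := by
  set τ := b - a with hτdef
  have hτ : 0 ≤ τ := by rw [hτdef]; linarith
  have hne : ∀ m n : ℤ, (δ * (m:ℝ) ≠ δ * n) ↔ m ≠ n := by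
    intro m n
    constructor
    · intro h hmn; exact h (by rw [hmn])
    · intro h hh
      exact h (by exact_mod_cast mul_left_cancel₀ hδ.ne' hh)
  rcases le_or_gt τ δ with hτδ | hτδ
  · -- case τ ≤ δ
    set k := ⌊a / δ⌋ with hk
    set a' := a - k * δ with ha'
    have hkδ : (k:ℝ) * δ ≤ a := by rw [hk]; exact (le_div_iff₀ hδ).mp (Int.floor_le _)
    have hkδ' : a < ((k:ℝ) + 1) * δ := by
      rw [hk]; exact (div_lt_iff₀ hδ).mp (Int.lt_floor_add_one _)
    have ha'0 : 0 ≤ a' := by rw [ha']; linarith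
    have ha'δ : a' < δ := by rw [ha']; nlinarith
    set c := δ - a' with hc
    have hfa : ∀ ξ : ℝ, ⌊(a + ξ) / δ⌋ = ⌊(a' + ξ) / δ⌋ + k := by
      intro ξ
      have : (a + ξ) / δ = (a' + ξ) / δ + (k:ℝ) := by rw [ha']; field_simp; ring
      rw [this, Int.floor_add_intCast]
    have hfb : ∀ ξ : ℝ, ⌊(b + ξ) / δ⌋ = ⌊(a' + τ + ξ) / δ⌋ + k := by
      intro ξ
      have : (b + ξ) / δ = (a' + τ + ξ) / δ + (k:ℝ) := by
        rw [ha', hτdef]; field_simp; ring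
      rw [this, Int.floor_add_intCast]
    have hE : {ξ ∈ Set.Icc (0:ℝ) δ | δ * ⌊(a + ξ) / δ⌋ ≠ δ * ⌊(b + ξ) / δ⌋}
        = Set.Ico (max (c - τ) 0) c ∪ Set.Icc (c + δ - τ) δ := by
      ext ξ
      simp only [Set.mem_setOf_eq, Set.mem_Icc, Set.mem_union, Set.mem_Ico, hne,
        hfa, hfb, Set.mem_sep_iff, max_le_iff, ne_eq, add_left_inj]
      have hmono : (a' + ξ) / δ ≤ (a' + τ + ξ) / δ :=
        (div_le_div_iff_of_pos_right hδ).mpr (by linarith)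
      constructor
      · rintro ⟨⟨hξ0, hξδ⟩, hne'⟩
        obtain ⟨n, h1, h2⟩ := (floor_ne_iff' hmono).mp hne'
        rw [div_lt_iff₀ hδ] at h1
        rw [le_div_iff₀ hδ] at h2
        have hn1 : (1:ℤ) ≤ n := by
          by_contra h
          push_neg at h
          have hn0 : n ≤ 0 := by omega
          have : (n:ℝ) ≤ 0 := by exact_mod_cast hn0
          nlinarith
        have hn2 : n ≤ 2 := by
          by_contra h
          push_neg at h
          have : (3:ℝ) ≤ (n:ℝ) := by exact_mod_cast h
          nlinarith
        interval_cases n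
        · left
          push_cast at h1 h2
          exact ⟨⟨by linarith, hξ0⟩, by linarith⟩
        · right
          push_cast at h1 h2
          exact ⟨by linarith, hξδ⟩
      · rintro (⟨⟨h1, h2⟩, h3⟩ | ⟨h1, h2⟩)
        · refine ⟨⟨h2, by linarith⟩, (floor_ne_iff' hmono).mpr ⟨1, ?_, ?_⟩⟩
          · rw [div_lt_iff₀ hδ]; push_cast; linarith
          · rw [le_div_iff₀ hδ]; push_cast; linarith
        · refine ⟨⟨by linarith, h2⟩, (floor_ne_iff' hmono).mpr ⟨2, ?_, ?_⟩⟩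
          · rw [div_lt_iff₀ hδ]; push_cast; linarith
          · rw [le_div_iff₀ hδ]; push_cast; linarith
    rw [hE]
    have hdisj : Disjoint (Set.Ico (max (c - τ) 0) c) (Set.Icc (c + δ - τ) δ) := by
      rw [Set.disjoint_left]
      rintro x ⟨_, hx2⟩ ⟨hx3, _⟩
      linarith
    rw [measure_union hdisj measurableSet_Icc, Real.volume_Ico, Real.volume_Icc]
    have h2 : δ - (c + δ - τ) = τ - c := by ring
    rw [h2]
    have key : ENNReal.ofReal (c - max (c - τ) 0) + ENNReal.ofReal (τ - c)
        = ENNReal.ofReal τ := by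
      rcases le_total c τ with h | h
      · rw [max_eq_right (by linarith), ← ENNReal.ofReal_add (by linarith) (by linarith)]
        ring_nf
      · rw [max_eq_left (by linarith),
          ENNReal.ofReal_of_nonpos (show τ - c ≤ 0 by linarith), add_zero,
          show c - (c - τ) = τ by ring]
    rw [key, ENNReal.toReal_ofReal hτ, min_eq_right ((div_le_one hδ).mpr hτδ)]
  · -- case δ < τ
    have hE : {ξ ∈ Set.Icc (0:ℝ) δ | δ * ⌊(a + ξ) / δ⌋ ≠ δ * ⌊(b + ξ) / δ⌋}
        = Set.Icc (0:ℝ) δ := by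
      ext ξ
      simp only [Set.mem_setOf_eq, Set.mem_sep_iff, and_iff_left_iff_imp, hne]
      intro hξ
      apply (floor_ne_iff' ((div_le_div_iff_of_pos_right hδ).mpr (by linarith))).mpr
      refine ⟨⌊(a + ξ) / δ⌋ + 1, ?_, ?_⟩
      · push_cast; exact Int.lt_floor_add_one _
      · rw [le_div_iff₀ hδ]
        push_cast
        have h2 : (⌊(a + ξ) / δ⌋ : ℝ) * δ ≤ a + ξ := (le_div_iff₀ hδ).mp (Int.floor_le _)
        nlinarith
    rw [hE, Real.volume_Icc]
    have : (1:ℝ) ≤ τ / δ := (one_le_div hδ).mpr hτδ.le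
    rw [min_eq_left this]
    rw [ENNReal.toReal_ofReal (by linarith)]
    field_simp
    ring
end
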